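/- arXiv:1011.3020 — 8 statements merged into one kernel-verified Lean document; each statement's English description precedes it below -/
import Mathlib

section
/- For any natural number k ≥ 1, there exist unit vectors μ_1,...,μ_k and ν_1,...,ν_k in a complex inner product space such that ⟨μ_i, ν_j⟩ = (1/2)·(k/(k−1))·(1 − δ_{i,j}) for all i,j (when k ≥ 2). Consequently γ₂(J − I) ≤ 2(1 − 1/k), where J and I are the k×k all-ones and identity matrices. -/
/-!
Let `e` be an orthonormal family of size `k` and `p i = e i - k⁻¹ • ∑ l, e l` the vertices of the
regular simplex centred at the origin, so that `⟪p i, p j⟫ = δ i j - 1/k`. A suitable multiple `z` of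
`∑ l, e l` is orthogonal to every `p i` and has `‖z‖² = 1 - 1/k`. Then `u i = z + p i` and
`v j = z - p j` satisfy `⟪u i, v j⟫ = ‖z‖² - ⟪p i, p j⟫ = 1 - δ i j` and
`‖u i‖² = ‖v j‖² = 2 (1 - 1/k)`, which bounds `γ₂(J - I)`; normalizing them gives `μ` and `ν`.
-/

noncomputable def gamma2 {X Y : Type*} [Fintype X] [Fintype Y] (A : Matrix X Y ℂ) : ENNReal :=
  sInf { c | ∃ (d : ℕ) (u : X → EuclideanSpace ℂ (Fin d)) (v : Y → EuclideanSpace ℂ (Fin d)),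
    (∀ x y, A x y = (inner ℂ (u x) (v y) : ℂ)) ∧
    (∀ x, ENNReal.ofReal (‖u x‖ ^ 2) ≤ c) ∧ (∀ y, ENNReal.ofReal (‖v y‖ ^ 2) ≤ c) }

noncomputable def gamma2F {X Y ι : Type*} [Fintype X] [Fintype Y] [Fintype ι]
    (A : Matrix X Y ℂ) (Z : ι → Matrix X Y ℂ) : ENNReal :=
  sInf { c | ∃ (d : ℕ) (u : X → ι → EuclideanSpace ℂ (Fin d)) (v : Y → ι → EuclideanSpace ℂ (Fin d)),
    (∀ x y, A x y = ∑ j, Z j x y * (inner ℂ (u x j) (v y j) : ℂ)) ∧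
    (∀ x, ENNReal.ofReal (∑ j, ‖u x j‖ ^ 2) ≤ c) ∧ (∀ y, ENNReal.ofReal (∑ j, ‖v y j‖ ^ 2) ≤ c) }

open scoped InnerProductSpace

section InnerProductSpace

variable {𝕜 E : Type*} [RCLike 𝕜] [NormedAddCommGroup E] [InnerProductSpace 𝕜 E]

theorem inner_add_sub_of_inner_eq_zero {z x y : E} (hx : ⟪z, x⟫_𝕜 = 0) (hy : ⟪z, y⟫_𝕜 = 0) :
    ⟪z + x, z - y⟫_𝕜 = (‖z‖ ^ 2 : ℝ) - ⟪x, y⟫_𝕜 := by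
  rw [inner_add_left, inner_sub_right, inner_sub_right, hy, inner_eq_zero_symm.mp hx,
    inner_self_eq_norm_sq_to_K]
  push_cast
  ring

theorem exists_norm_eq_one_inner_eq_inv_mul {ι κ : Type*} {u : ι → E} {v : κ → E}
    {A : ι → κ → 𝕜} {r : ℝ} (hr : 0 < r) (huv : ∀ i j, ⟪u i, v j⟫_𝕜 = A i j)
    (hu : ∀ i, ‖u i‖ ^ 2 = r) (hv : ∀ j, ‖v j‖ ^ 2 = r) :
    ∃ (μ : ι → E) (ν : κ → E), (∀ i, ‖μ i‖ = 1) ∧ (∀ j, ‖ν j‖ = 1) ∧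
      ∀ i j, ⟪μ i, ν j⟫_𝕜 = (r : 𝕜)⁻¹ * A i j := by
  have hnorm {x : E} (hx : ‖x‖ ^ 2 = r) : ‖((√r)⁻¹ : 𝕜) • x‖ = 1 := by
    have hsqrt : 0 < √r := Real.sqrt_pos.mpr hr
    have hx' : ‖x‖ = √r := by rw [← hx, Real.sqrt_sq (norm_nonneg x)]
    rw [norm_smul, norm_inv, RCLike.norm_ofReal, abs_of_pos hsqrt, hx', inv_mul_cancel₀ hsqrt.ne']
  refine ⟨fun i => ((√r)⁻¹ : 𝕜) • u i, fun j => ((√r)⁻¹ : 𝕜) • v j,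
    fun i => hnorm (hu i), fun j => hnorm (hv j), fun i j => ?_⟩
  rw [inner_smul_left, inner_smul_right, huv, ← mul_assoc, map_inv₀, RCLike.conj_ofReal,
    ← mul_inv, ← RCLike.ofReal_mul, Real.mul_self_sqrt hr.le]

end InnerProductSpace

section Simplex

variable {𝕜 E ι : Type*} [RCLike 𝕜] [NormedAddCommGroup E] [InnerProductSpace 𝕜 E]
  [Fintype ι] {e : ι → E}

theorem Orthonormal.inner_sum_right (he : Orthonormal 𝕜 e) (i : ι) : ⟪e i, ∑ l, e l⟫_𝕜 = 1 := by
  simpa using he.inner_right_sum (fun _ => (1 : 𝕜)) (Finset.mem_univ i)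

theorem Orthonormal.inner_sum_left (he : Orthonormal 𝕜 e) (i : ι) : ⟪∑ l, e l, e i⟫_𝕜 = 1 := by
  rw [← inner_conj_symm, he.inner_sum_right, map_one]

theorem Orthonormal.inner_sum_sum (he : Orthonormal 𝕜 e) :
    ⟪∑ l, e l, ∑ l, e l⟫_𝕜 = Fintype.card ι := by
  simpa using he.inner_sum (fun _ => (1 : 𝕜)) (fun _ => 1) Finset.univ

variable (𝕜) in
noncomputable def simplexVertex (e : ι → E) (i : ι) : E :=
  e i - (Fintype.card ι : 𝕜)⁻¹ • ∑ l, e l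

theorem Orthonormal.inner_sum_simplexVertex (he : Orthonormal 𝕜 e) (i : ι) :
    ⟪∑ l, e l, simplexVertex 𝕜 e i⟫_𝕜 = 0 := by
  have : (Fintype.card ι : 𝕜) ≠ 0 := Nat.cast_ne_zero.mpr (Fintype.card_pos_iff.mpr ⟨i⟩).ne'
  rw [simplexVertex, inner_sub_right, inner_smul_right, he.inner_sum_left, he.inner_sum_sum,
    inv_mul_cancel₀ this, sub_self]

theorem Orthonormal.inner_simplexVertex [DecidableEq ι] (he : Orthonormal 𝕜 e) (i j : ι) :
    ⟪simplexVertex 𝕜 e i, simplexVertex 𝕜 e j⟫_𝕜 =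
      (if i = j then 1 else 0) - (Fintype.card ι : 𝕜)⁻¹ := by
  have : (Fintype.card ι : 𝕜) ≠ 0 := Nat.cast_ne_zero.mpr (Fintype.card_pos_iff.mpr ⟨i⟩).ne'
  simp only [simplexVertex, inner_sub_left, inner_sub_right, inner_smul_left, inner_smul_right,
    he.inner_sum_left, he.inner_sum_right, he.inner_sum_sum, orthonormal_iff_ite.mp he, map_inv₀,
    map_natCast]
  field_simp
  ring

theorem Orthonormal.norm_sum_sq (he : Orthonormal 𝕜 e) : ‖∑ l, e l‖ ^ 2 = Fintype.card ι := by
  have := he.inner_sum_sum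
  rw [inner_self_eq_norm_sq_to_K] at this
  exact_mod_cast this

theorem Orthonormal.norm_simplexVertex_sq (he : Orthonormal 𝕜 e) (i : ι) :
    ‖simplexVertex 𝕜 e i‖ ^ 2 = 1 - (Fintype.card ι : ℝ)⁻¹ := by
  classical
  have := he.inner_simplexVertex i i
  rw [inner_self_eq_norm_sq_to_K, if_pos rfl] at this
  apply RCLike.ofReal_injective (K := 𝕜)
  push_cast
  exact this

theorem Orthonormal.exists_factorization_allOnes_sub_one [DecidableEq ι] (he : Orthonormal 𝕜 e) :
    ∃ u v : ι → E, (∀ i j, ⟪u i, v j⟫_𝕜 = if i = j then 0 else 1) ∧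
      (∀ i, ‖u i‖ ^ 2 = 2 * (1 - 1 / (Fintype.card ι : ℝ))) ∧
      (∀ j, ‖v j‖ ^ 2 = 2 * (1 - 1 / (Fintype.card ι : ℝ))) := by
  set p := simplexVertex 𝕜 e
  set z : E := ((√(Fintype.card ι - 1) / Fintype.card ι : ℝ) : 𝕜) • ∑ l, e l
  have hz : ∀ i, ⟪z, p i⟫_𝕜 = 0 := fun i => by
    rw [inner_smul_left, he.inner_sum_simplexVertex, mul_zero]
  have hzn : ∀ i, ‖z‖ ^ 2 = 1 - (Fintype.card ι : ℝ)⁻¹ := fun i => by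
    have hn : (1 : ℝ) ≤ Fintype.card ι := Nat.one_le_cast.mpr (Fintype.card_pos_iff.mpr ⟨i⟩)
    rw [norm_smul, mul_pow, he.norm_sum_sq, RCLike.norm_ofReal, sq_abs, div_pow,
      Real.sq_sqrt (by linarith)]
    field_simp
  refine ⟨fun i => z + p i, fun j => z - p j, fun i j => ?_, fun i => ?_, fun j => ?_⟩
  · rw [inner_add_sub_of_inner_eq_zero (hz i) (hz j), hzn i, he.inner_simplexVertex]
    split_ifs <;> push_cast <;> ring
  · rw [norm_add_sq (𝕜 := 𝕜), hz i, map_zero, hzn i, he.norm_simplexVertex_sq]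
    ring
  · rw [norm_sub_sq (𝕜 := 𝕜), hz j, map_zero, hzn j, he.norm_simplexVertex_sq]
    ring

end Simplex

theorem gamma2_le_ofReal {X Y : Type*} [Fintype X] [Fintype Y] {A : Matrix X Y ℂ} {d : ℕ}
    {u : X → EuclideanSpace ℂ (Fin d)} {v : Y → EuclideanSpace ℂ (Fin d)} {c : ℝ}
    (hA : ∀ x y, A x y = ⟪u x, v y⟫_ℂ) (hu : ∀ x, ‖u x‖ ^ 2 ≤ c) (hv : ∀ y, ‖v y‖ ^ 2 ≤ c) :
    gamma2 A ≤ ENNReal.ofReal c :=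
  sInf_le ⟨d, u, v, hA, fun x => ENNReal.ofReal_le_ofReal (hu x),
    fun y => ENNReal.ofReal_le_ofReal (hv y)⟩

theorem stmt0_general (k : ℕ) :
    (2 ≤ k → ∃ (μ ν : Fin k → EuclideanSpace ℂ (Fin k)),
      (∀ i, ‖μ i‖ = 1) ∧ (∀ i, ‖ν i‖ = 1) ∧
      (∀ i j, (inner ℂ (μ i) (ν j) : ℂ) =
        (1 / 2) * ((k : ℂ) / ((k : ℂ) - 1)) * (if i = j then 0 else 1))) ∧
    gamma2 (Matrix.of fun i j : Fin k => if i = j then (0 : ℂ) else 1) ≤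
      ENNReal.ofReal (2 * (1 - 1 / (k : ℝ))) := by
  obtain ⟨u, v, huv, hu, hv⟩ :=
    (EuclideanSpace.orthonormal_single (𝕜 := ℂ) (ι := Fin k)).exists_factorization_allOnes_sub_one
  rw [Fintype.card_fin] at hu hv
  refine ⟨fun hk => ?_, gamma2_le_ofReal (fun i j => (huv i j).symm) (fun i => (hu i).le)
    (fun j => (hv j).le)⟩
  have hk' : (2 : ℝ) ≤ k := by exact_mod_cast hk
  have hr : 0 < 2 * (1 - 1 / (k : ℝ)) := by
    have : 1 / (k : ℝ) < 1 := (div_lt_one (by linarith)).mpr (by linarith)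
    linarith
  obtain ⟨μ, ν, hμ, hν, hμν⟩ := exists_norm_eq_one_inner_eq_inv_mul hr huv hu hv
  refine ⟨μ, ν, hμ, hν, fun i j => ?_⟩
  have hk1 : (k : ℂ) - 1 ≠ 0 := sub_ne_zero.mpr (by exact_mod_cast (by omega : k ≠ 1))
  have hk0 : (k : ℂ) ≠ 0 := by exact_mod_cast (by omega : k ≠ 0)
  rw [hμν]
  congr 1
  push_cast
  field_simp

theorem stmt0 (k : ℕ) (hk : 1 ≤ k) :
    (2 ≤ k → ∃ (μ ν : Fin k → EuclideanSpace ℂ (Fin k)),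
      (∀ i, ‖μ i‖ = 1) ∧ (∀ i, ‖ν i‖ = 1) ∧
      (∀ i j, (inner ℂ (μ i) (ν j) : ℂ) =
        (1 / 2) * ((k : ℂ) / ((k : ℂ) - 1)) * (if i = j then 0 else 1))) ∧
    gamma2 (Matrix.of fun i j : Fin k => if i = j then (0 : ℂ) else 1) ≤
      ENNReal.ofReal (2 * (1 - 1 / (k : ℝ))) :=
  stmt0_general k
end

section
/- Effective spectral gap lemma: Let Π and Λ be orthogonal projections on a finite-dimensional complex Hilbert space, and let R = (2Π − I)(2Λ − I). Let {|β⟩} be an orthonormal eigenbasis of R with eigenvalues e^{iθ(β)}, θ(β) ∈ (−π, π], and for Θ ≥ 0 let P_Θ be the orthogonal projection onto the span of eigenvectors with |θ(β)| ≤ Θ. If Λ|w⟩ = 0, then ‖P_Θ Π |w⟩‖ ≤ (Θ/2)·‖|w⟩‖. -/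
/-!
Write `A = 2Π - 1` and `B = 2Λ - 1`; both are self-adjoint and `A² = 1`. Since `Λ w = 0`, `w` is a
`-1`-eigenvector of `B`. If `A B β = c β` with `|c| = 1`, then `B β = c A β`, and pairing with `w`
gives `⟪β, A w⟫ = -c ⟪β, w⟫`, i.e. `⟪β, Π w⟫ = (1 - c) / 2 ⟪β, w⟫`. For `c = e^{iθ}` with
`|θ| ≤ Θ` this coefficient has modulus at most `Θ / 2`, and Bessel's inequality finishes.
-/

open scoped InnerProductSpace ComplexConjugate

section Reflection

variable {S R : Type*} [Semiring S] [Ring R] [Module S R] {p : R}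

theorem IsIdempotentElem.two_smul_sub_one_mul_self (hp : IsIdempotentElem p) :
    ((2 : S) • p - 1) * ((2 : S) • p - 1) = 1 := by
  simp only [two_smul, add_mul, mul_add, sub_mul, mul_sub, hp.eq, one_mul, mul_one]
  abel

theorem IsSelfAdjoint.two_smul_sub_one [StarRing R] (hp : IsSelfAdjoint p) :
    IsSelfAdjoint ((2 : S) • p - 1) := by
  rw [two_smul]
  exact (hp.add hp).sub (.one R)

end Reflection

section InnerProductSpace

variable {𝕜 E : Type*} [RCLike 𝕜] [NormedAddCommGroup E] [InnerProductSpace 𝕜 E]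

theorem inner_apply_eq_neg_mul_inner_of_apply_apply_eq_smul [CompleteSpace E]
    {A B : E →L[𝕜] E} (hA : IsSelfAdjoint A) (hAA : A * A = 1) (hB : IsSelfAdjoint B)
    {c : 𝕜} (hc : ‖c‖ = 1) {v w : E} (hv : A (B v) = c • v) (hw : B w = -w) :
    ⟪v, A w⟫_𝕜 = -c * ⟪v, w⟫_𝕜 := by
  have hBv : B v = c • A v := by
    rw [← map_smul, ← hv]
    exact (DFunLike.congr_fun hAA (B v)).symm
  have h : conj c * ⟪v, A w⟫_𝕜 = -⟪v, w⟫_𝕜 := calc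
    conj c * ⟪v, A w⟫_𝕜 = ⟪c • A v, w⟫_𝕜 := by
      rw [inner_smul_left]
      exact congrArg _ (hA.isSymmetric v w).symm
    _ = ⟪v, B w⟫_𝕜 := by rw [← hBv]; exact hB.isSymmetric v w
    _ = -⟪v, w⟫_𝕜 := by rw [hw, inner_neg_right]
  have hcc : c * conj c = 1 := by
    rw [RCLike.mul_conj, hc, RCLike.ofReal_one, one_pow]
  linear_combination c * h - ⟪v, A w⟫_𝕜 * hcc

theorem inner_apply_eq_one_sub_div_two_mul_inner [CompleteSpace E] {P L : E →L[𝕜] E}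
    (hP₁ : IsIdempotentElem P) (hP₂ : IsSelfAdjoint P) (hL : IsSelfAdjoint L)
    {c : 𝕜} (hc : ‖c‖ = 1) {v w : E}
    (hv : ((2 : 𝕜) • P - 1) (((2 : 𝕜) • L - 1) v) = c • v) (hw : L w = 0) :
    ⟪v, P w⟫_𝕜 = (1 - c) / 2 * ⟪v, w⟫_𝕜 := by
  have h := inner_apply_eq_neg_mul_inner_of_apply_apply_eq_smul hP₂.two_smul_sub_one
    hP₁.two_smul_sub_one_mul_self hL.two_smul_sub_one hc hv (w := w) (by simp [hw])
  simp only [sub_apply, smul_apply, one_apply_eq_self, inner_sub_right, inner_smul_right] at h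
  linear_combination h / 2

theorem Orthonormal.norm_sum_smul_le {ι : Type*} {v : ι → E} (hv : Orthonormal 𝕜 v)
    (s : Finset ι) {c : ι → 𝕜} {K : ℝ} (hK : 0 ≤ K) (w : E)
    (hc : ∀ i ∈ s, ‖c i‖ ≤ K * ‖⟪v i, w⟫_𝕜‖) :
    ‖∑ i ∈ s, c i • v i‖ ≤ K * ‖w‖ := by
  refine (pow_le_pow_iff_left₀ (norm_nonneg _) (by positivity) two_ne_zero).mp ?_
  calc ‖∑ i ∈ s, c i • v i‖ ^ 2 = ∑ i ∈ s, ‖c i‖ ^ 2 := by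
        rw [← RCLike.ofReal_inj (K := 𝕜), RCLike.ofReal_pow, ← inner_self_eq_norm_sq_to_K,
          hv.inner_sum, RCLike.ofReal_sum]
        simp only [RCLike.conj_mul, RCLike.ofReal_pow]
    _ ≤ ∑ i ∈ s, K ^ 2 * ‖⟪v i, w⟫_𝕜‖ ^ 2 := by
      gcongr with i hi
      rw [← mul_pow]
      exact pow_le_pow_left₀ (norm_nonneg _) (hc i hi) 2
    _ = K ^ 2 * ∑ i ∈ s, ‖⟪v i, w⟫_𝕜‖ ^ 2 := (Finset.mul_sum ..).symm
    _ ≤ K ^ 2 * ‖w‖ ^ 2 := by gcongr; exact hv.sum_inner_products_le w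
    _ = (K * ‖w‖) ^ 2 := (mul_pow ..).symm

end InnerProductSpace

theorem Complex.norm_one_sub_exp_ofReal_mul_I_le (t : ℝ) :
    ‖1 - Complex.exp (t * Complex.I)‖ ≤ |t| := by
  rw [norm_sub_rev, mul_comm]
  exact Real.norm_exp_I_mul_ofReal_sub_one_le

theorem stmt1_general {d : ℕ} (P L : EuclideanSpace ℂ (Fin d) →L[ℂ] EuclideanSpace ℂ (Fin d))
    (hP1 : IsIdempotentElem P) (hP2 : IsSelfAdjoint P)
    (hL2 : IsSelfAdjoint L)
    (b : OrthonormalBasis (Fin d) ℂ (EuclideanSpace ℂ (Fin d)))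
    (θ : Fin d → ℝ)
    (hR : ∀ i, ((2 : ℂ) • P - 1) (((2 : ℂ) • L - 1) (b i)) =
      Complex.exp ((θ i : ℂ) * Complex.I) • b i)
    (Θ : ℝ) (hΘ : 0 ≤ Θ) (w : EuclideanSpace ℂ (Fin d)) (hw : L w = 0) :
    ‖∑ i ∈ Finset.univ.filter (fun i => |θ i| ≤ Θ), (inner ℂ (b i) (P w) : ℂ) • b i‖ ≤
      Θ / 2 * ‖w‖ := by
  refine b.orthonormal.norm_sum_smul_le _ (by positivity) w fun i hi => ?_
  have hiΘ : |θ i| ≤ Θ := (Finset.mem_filter.mp hi).2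
  rw [inner_apply_eq_one_sub_div_two_mul_inner hP1 hP2 hL2 (Complex.norm_exp_ofReal_mul_I _)
    (hR i) hw, norm_mul, norm_div, Complex.norm_two]
  gcongr
  exact (Complex.norm_one_sub_exp_ofReal_mul_I_le _).trans hiΘ

theorem stmt1 {d : ℕ} (P L : EuclideanSpace ℂ (Fin d) →L[ℂ] EuclideanSpace ℂ (Fin d))
    (hP1 : IsIdempotentElem P) (hP2 : IsSelfAdjoint P)
    (hL1 : IsIdempotentElem L) (hL2 : IsSelfAdjoint L)
    (b : OrthonormalBasis (Fin d) ℂ (EuclideanSpace ℂ (Fin d)))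
    (θ : Fin d → ℝ) (hθ : ∀ i, θ i ∈ Set.Ioc (-Real.pi) Real.pi)
    (hR : ∀ i, ((2 : ℂ) • P - 1) (((2 : ℂ) • L - 1) (b i)) =
      Complex.exp ((θ i : ℂ) * Complex.I) • b i)
    (Θ : ℝ) (hΘ : 0 ≤ Θ) (w : EuclideanSpace ℂ (Fin d)) (hw : L w = 0) :
    ‖∑ i ∈ Finset.univ.filter (fun i => |θ i| ≤ Θ), (inner ℂ (b i) (P w) : ℂ) • b i‖ ≤
      Θ / 2 * ‖w‖ :=
  stmt1_general P L hP1 hP2 hL2 b θ hR Θ hΘ w hw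
end

section
/- If Π is an orthogonal projection and |v⟩, |v''⟩ are vectors with |v''⟩ = (2Π − I)|v'⟩ and |v'⟩ = (2Λ − I)|v⟩ for a projection Λ with Λ|w⟩ = 0, then ⟨v + v'|w⟩ = 0, and hence ‖|v⟩‖² restricted as |v⟩ = P_Θ Π|w⟩ satisfies ‖|v⟩‖² = (1/2)|⟨v − v''|(Π − (I−Π))|w⟩| ≤ (1/2)‖|v⟩ − |v''⟩‖·‖|w⟩‖. -/
/-!
Since `Λ w = 0`, the reflection `2Λ - 1` negates `⟪·, w⟫`, and the reflection `2Π - 1` is unitary,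
so `⟪v'', (2Π - 1) w⟫ = ⟪v', w⟫ = -⟪v, w⟫`. Hence `⟪v - v'', (2Π - 1) w⟫ = 2 ⟪v, Π w⟫`, and
`⟪v, Π w⟫ = ‖v‖²` because `v` is the orthogonal projection of `Π w` onto the span of part of
an orthonormal basis. Cauchy–Schwarz and `‖(2Π - 1) w‖ = ‖w‖` give the bound.
-/

open scoped InnerProductSpace

variable {𝕜 E : Type*} [RCLike 𝕜] [NormedAddCommGroup E] [InnerProductSpace 𝕜 E]

lemma Orthonormal.inner_sum_inner_smul_left_eq_norm_sq {ι : Type*} {b : ι → E}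
    (hb : Orthonormal 𝕜 b) (s : Finset ι) (x : E) :
    ⟪∑ i ∈ s, ⟪b i, x⟫_𝕜 • b i, x⟫_𝕜 = (‖∑ i ∈ s, ⟪b i, x⟫_𝕜 • b i‖ : 𝕜) ^ 2 := by
  rw [← inner_self_eq_norm_sq_to_K, sum_inner, hb.inner_sum]
  simp only [inner_smul_left, inner_conj_symm]

variable [CompleteSpace E]

lemma IsStarProjection.two_smul_sub_one_mem_unitary {P : E →L[𝕜] E} (hP : IsStarProjection P) :
    (2 : 𝕜) • P - 1 ∈ unitary (E →L[𝕜] E) := by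
  rw [two_smul, ← two_mul]
  exact hP.two_mul_sub_one_mem_unitary

lemma inner_two_smul_sub_one_apply_left_of_apply_eq_zero {L : E →L[𝕜] E} (hL : IsSelfAdjoint L)
    {w : E} (hw : L w = 0) (v : E) :
    ⟪((2 : 𝕜) • L - 1) v, w⟫_𝕜 = -⟪v, w⟫_𝕜 := by
  have hLvw : ⟪L v, w⟫_𝕜 = 0 := by
    rw [show ⟪L v, w⟫_𝕜 = ⟪v, L w⟫_𝕜 from hL.isSymmetric v w, hw, inner_zero_right]
  simp [inner_sub_left, inner_smul_left, hLvw]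

lemma inner_sub_two_smul_sub_one_apply_apply {P L : E →L[𝕜] E} (hP : IsStarProjection P)
    (hL : IsSelfAdjoint L) {w : E} (hw : L w = 0) (v : E) :
    ⟪v - ((2 : 𝕜) • P - 1) (((2 : 𝕜) • L - 1) v), ((2 : 𝕜) • P - 1) w⟫_𝕜 = 2 * ⟪v, P w⟫_𝕜 := by
  rw [inner_sub_left,
    ContinuousLinearMap.inner_map_map_of_mem_unitary hP.two_smul_sub_one_mem_unitary,
    inner_two_smul_sub_one_apply_left_of_apply_eq_zero hL hw]
  simp only [sub_apply, smul_apply,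
    one_apply_eq_self, inner_sub_right, inner_smul_right]
  ring

theorem stmt3_general {d : ℕ} (P L : EuclideanSpace ℂ (Fin d) →L[ℂ] EuclideanSpace ℂ (Fin d))
    (hP1 : IsIdempotentElem P) (hP2 : IsSelfAdjoint P)
    (hL2 : IsSelfAdjoint L)
    (b : OrthonormalBasis (Fin d) ℂ (EuclideanSpace ℂ (Fin d)))
    (θ : Fin d → ℝ)
    (Θ : ℝ) (w : EuclideanSpace ℂ (Fin d)) (hw : L w = 0)
    (v v' v'' : EuclideanSpace ℂ (Fin d))
    (hv : v = ∑ i ∈ Finset.univ.filter (fun i => |θ i| ≤ Θ),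
      (inner ℂ (b i) (P w) : ℂ) • b i)
    (hv' : v' = ((2 : ℂ) • L - 1) v)
    (hv'' : v'' = ((2 : ℂ) • P - 1) v') :
    (inner ℂ (v + v') w : ℂ) = 0 ∧
    ‖v‖ ^ 2 = 1 / 2 * ‖(inner ℂ (v - v'') (((2 : ℂ) • P - 1) w) : ℂ)‖ ∧
    ‖v‖ ^ 2 ≤ 1 / 2 * (‖v - v''‖ * ‖w‖) := by
  have hP : IsStarProjection P := ⟨hP1, hP2⟩
  have hvPw : ⟪v, P w⟫_ℂ = (‖v‖ : ℂ) ^ 2 := by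
    rw [hv]
    exact b.orthonormal.inner_sum_inner_smul_left_eq_norm_sq _ _
  have hkey : ⟪v - v'', ((2 : ℂ) • P - 1) w⟫_ℂ = 2 * (‖v‖ : ℂ) ^ 2 := by
    rw [hv'', hv', inner_sub_two_smul_sub_one_apply_apply hP hL2 hw, hvPw]
  have hnorm : ‖v‖ ^ 2 = 1 / 2 * ‖⟪v - v'', ((2 : ℂ) • P - 1) w⟫_ℂ‖ := by
    rw [hkey, norm_mul, norm_pow, Complex.norm_real, norm_norm, Complex.norm_two]
    ring
  refine ⟨?_, hnorm, ?_⟩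
  · rw [inner_add_left, hv', inner_two_smul_sub_one_apply_left_of_apply_eq_zero hL2 hw,
      add_neg_cancel]
  · rw [hnorm, ← ContinuousLinearMap.norm_map_of_mem_unitary hP.two_smul_sub_one_mem_unitary w]
    gcongr
    exact norm_inner_le_norm _ _

theorem stmt3 {d : ℕ} (P L : EuclideanSpace ℂ (Fin d) →L[ℂ] EuclideanSpace ℂ (Fin d))
    (hP1 : IsIdempotentElem P) (hP2 : IsSelfAdjoint P)
    (hL1 : IsIdempotentElem L) (hL2 : IsSelfAdjoint L)
    (b : OrthonormalBasis (Fin d) ℂ (EuclideanSpace ℂ (Fin d)))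
    (θ : Fin d → ℝ) (hθ : ∀ i, θ i ∈ Set.Ioc (-Real.pi) Real.pi)
    (hR : ∀ i, ((2 : ℂ) • P - 1) (((2 : ℂ) • L - 1) (b i)) =
      Complex.exp ((θ i : ℂ) * Complex.I) • b i)
    (Θ : ℝ) (hΘ : 0 ≤ Θ) (w : EuclideanSpace ℂ (Fin d)) (hw : L w = 0)
    (v v' v'' : EuclideanSpace ℂ (Fin d))
    (hv : v = ∑ i ∈ Finset.univ.filter (fun i => |θ i| ≤ Θ),
      (inner ℂ (b i) (P w) : ℂ) • b i)
    (hv' : v' = ((2 : ℂ) • L - 1) v)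
    (hv'' : v'' = ((2 : ℂ) • P - 1) v') :
    (inner ℂ (v + v') w : ℂ) = 0 ∧
    ‖v‖ ^ 2 = 1 / 2 * ‖(inner ℂ (v - v'') (((2 : ℂ) • P - 1) w) : ℂ)‖ ∧
    ‖v‖ ^ 2 ≤ 1 / 2 * (‖v - v''‖ * ‖w‖) :=
  stmt3_general P L hP1 hP2 hL2 b θ Θ w hw v v' v'' hv hv' hv''
end

section
/- Schur product bound for filtered γ₂: for matrices A, B of the same size and a family Z of matrices of that size, γ₂(A ∘ B | Z) ≤ γ₂(A | Z) · γ₂(B). -/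
open scoped Matrix ComplexConjugate

section Kronecker

variable {𝕜 : Type*} [RCLike 𝕜] {m n : ℕ}

noncomputable def euclideanKronecker (u : EuclideanSpace 𝕜 (Fin m)) (p : EuclideanSpace 𝕜 (Fin n)) :
    EuclideanSpace 𝕜 (Fin (m * n)) :=
  WithLp.toLp 2 fun k => u (finProdFinEquiv.symm k).1 * p (finProdFinEquiv.symm k).2

lemma inner_euclideanKronecker (u v : EuclideanSpace 𝕜 (Fin m)) (p q : EuclideanSpace 𝕜 (Fin n)) :
    inner 𝕜 (euclideanKronecker u p) (euclideanKronecker v q) = inner 𝕜 u v * inner 𝕜 p q := by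
  simp only [PiLp.inner_apply, RCLike.inner_apply, euclideanKronecker]
  rw [Finset.sum_mul_sum, ← Fintype.sum_prod_type']
  exact Fintype.sum_equiv finProdFinEquiv.symm _ _ fun k => by simp only [map_mul]; ring

lemma norm_euclideanKronecker (u : EuclideanSpace 𝕜 (Fin m)) (p : EuclideanSpace 𝕜 (Fin n)) :
    ‖euclideanKronecker u p‖ = ‖u‖ * ‖p‖ := by
  have h := inner_euclideanKronecker u u p p
  simp only [inner_self_eq_norm_sq_to_K, ← mul_pow] at h
  exact (sq_eq_sq₀ (norm_nonneg _) (by positivity)).1 (by exact_mod_cast h)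

lemma ofReal_sum_norm_sq_euclideanKronecker {ι : Type*} [Fintype ι]
    (w : ι → EuclideanSpace 𝕜 (Fin m)) (r : EuclideanSpace 𝕜 (Fin n)) :
    ENNReal.ofReal (∑ j, ‖euclideanKronecker (w j) r‖ ^ 2) =
      ENNReal.ofReal (∑ j, ‖w j‖ ^ 2) * ENNReal.ofReal (‖r‖ ^ 2) := by
  simp only [norm_euclideanKronecker, mul_pow, ← Finset.sum_mul]
  exact ENNReal.ofReal_mul (by positivity)

end Kronecker

lemma ENNReal.le_sInf_mul_sInf {a : ENNReal} {S T : Set ENNReal} (hS : sInf S ≠ ⊤) (hT : sInf T ≠ ⊤)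
    (h : ∀ s ∈ S, ∀ t ∈ T, a ≤ s * t) : a ≤ sInf S * sInf T := by
  obtain ⟨s, hs, hs_top⟩ := sInf_lt_iff.1 (lt_top_iff_ne_top.2 hS)
  obtain ⟨t, ht, ht_top⟩ := sInf_lt_iff.1 (lt_top_iff_ne_top.2 hT)
  rw [sInf_eq_iInf', sInf_eq_iInf']
  exact ENNReal.le_iInf_mul_iInf ⟨⟨s, hs⟩, hs_top.ne⟩ ⟨⟨t, ht⟩, ht_top.ne⟩
    fun s t => h s s.2 t t.2

section Factorization

variable {X Y ι : Type*}

def gamma2Bounds (B : Matrix X Y ℂ) : Set ENNReal :=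
  { c | ∃ (d : ℕ) (u : X → EuclideanSpace ℂ (Fin d)) (v : Y → EuclideanSpace ℂ (Fin d)),
    (∀ x y, B x y = (inner ℂ (u x) (v y) : ℂ)) ∧
    (∀ x, ENNReal.ofReal (‖u x‖ ^ 2) ≤ c) ∧ (∀ y, ENNReal.ofReal (‖v y‖ ^ 2) ≤ c) }

def gamma2FBounds [Fintype ι] (A : Matrix X Y ℂ) (Z : ι → Matrix X Y ℂ) : Set ENNReal :=
  { c | ∃ (d : ℕ) (u : X → ι → EuclideanSpace ℂ (Fin d)) (v : Y → ι → EuclideanSpace ℂ (Fin d)),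
    (∀ x y, A x y = ∑ j, Z j x y * (inner ℂ (u x j) (v y j) : ℂ)) ∧
    (∀ x, ENNReal.ofReal (∑ j, ‖u x j‖ ^ 2) ≤ c) ∧ (∀ y, ENNReal.ofReal (∑ j, ‖v y j‖ ^ 2) ≤ c) }

lemma gamma2_eq_sInf [Fintype X] [Fintype Y] (B : Matrix X Y ℂ) :
    gamma2 B = sInf (gamma2Bounds B) := rfl

lemma gamma2F_eq_sInf [Fintype X] [Fintype Y] [Fintype ι] (A : Matrix X Y ℂ)
    (Z : ι → Matrix X Y ℂ) : gamma2F A Z = sInf (gamma2FBounds A Z) := rfl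

lemma mul_mem_gamma2FBounds_hadamard [Fintype ι] {A B : Matrix X Y ℂ} {Z : ι → Matrix X Y ℂ}
    {s t : ENNReal} (hs : s ∈ gamma2FBounds A Z) (ht : t ∈ gamma2Bounds B) :
    s * t ∈ gamma2FBounds (A ⊙ B) Z := by
  obtain ⟨d₁, u, v, hA, hu, hv⟩ := hs
  obtain ⟨d₂, p, q, hB, hp, hq⟩ := ht
  refine ⟨d₁ * d₂, fun x j => euclideanKronecker (u x j) (p x),
    fun y j => euclideanKronecker (v y j) (q y), fun x y => ?_, fun x => ?_, fun y => ?_⟩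
  · simp only [Matrix.hadamard_apply, hA, hB, inner_euclideanKronecker, Finset.sum_mul, mul_assoc]
  · rw [ofReal_sum_norm_sq_euclideanKronecker]
    exact mul_le_mul' (hu x) (hp x)
  · rw [ofReal_sum_norm_sq_euclideanKronecker]
    exact mul_le_mul' (hv y) (hq y)

lemma zero_mem_gamma2FBounds_zero [Fintype ι] (Z : ι → Matrix X Y ℂ) :
    0 ∈ gamma2FBounds (0 : Matrix X Y ℂ) Z :=
  ⟨0, fun _ _ => 0, fun _ _ => 0, by simp, by simp, by simp⟩

variable [Fintype X] [Fintype Y]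

-- Factor `B` through its rows: `u x` is the conjugated row `x`, `v y` the `y`-th basis vector.
lemma gamma2_ne_top (B : Matrix X Y ℂ) : gamma2 B ≠ ⊤ := by
  rw [gamma2_eq_sInf]
  let e := Fintype.equivFin Y
  let u : X → EuclideanSpace ℂ (Fin (Fintype.card Y)) :=
    fun x => WithLp.toLp 2 fun k => conj (B x (e.symm k))
  let M : ℝ := ∑ x, ‖u x‖ ^ 2 + 1
  refine ne_top_of_le_ne_top ENNReal.ofReal_ne_top (sInf_le (a := ENNReal.ofReal M)
    ⟨_, u, fun y => EuclideanSpace.single (e y) 1, fun x y => ?_, fun x => ?_, fun y => ?_⟩)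
  · simp [u, EuclideanSpace.inner_single_right]
  · refine ENNReal.ofReal_le_ofReal ?_
    have := Finset.single_le_sum (fun x _ => sq_nonneg ‖u x‖) (Finset.mem_univ x)
    linarith
  · refine ENNReal.ofReal_le_ofReal ?_
    simp [M, Finset.sum_nonneg]

lemma ofReal_norm_apply_le_gamma2 (B : Matrix X Y ℂ) (x : X) (y : Y) :
    ENNReal.ofReal ‖B x y‖ ≤ gamma2 B := by
  rw [gamma2_eq_sInf]
  refine le_sInf fun c ⟨d, u, v, hB, hu, hv⟩ => ?_
  have hle : ‖B x y‖ ≤ max (‖u x‖ ^ 2) (‖v y‖ ^ 2) := by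
    rw [hB]
    refine (norm_inner_le_norm (𝕜 := ℂ) _ _).trans ?_
    rcases le_total ‖u x‖ ‖v y‖ with h | h
    · exact (mul_le_mul_of_nonneg_right h (norm_nonneg _)).trans (by simp [sq])
    · exact (mul_le_mul_of_nonneg_left h (norm_nonneg _)).trans (by simp [sq])
  calc ENNReal.ofReal ‖B x y‖ ≤ ENNReal.ofReal (max (‖u x‖ ^ 2) (‖v y‖ ^ 2)) :=
        ENNReal.ofReal_le_ofReal hle
    _ ≤ c := by rw [ENNReal.ofReal_max]; exact max_le (hu x) (hv y)

lemma eq_zero_of_gamma2_eq_zero {B : Matrix X Y ℂ} (h : gamma2 B = 0) : B = 0 := by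
  ext x y
  simpa [h] using ofReal_norm_apply_le_gamma2 B x y

end Factorization

theorem stmt7 {X Y ι : Type*} [Fintype X] [Fintype Y] [Fintype ι]
    (A B : Matrix X Y ℂ) (Z : ι → Matrix X Y ℂ) :
    gamma2F (Matrix.hadamard A B) Z ≤ gamma2F A Z * gamma2 B := by
  rcases eq_or_ne (gamma2 B) 0 with hB | hB
  · rw [eq_zero_of_gamma2_eq_zero hB, Matrix.hadamard_zero, gamma2F_eq_sInf]
    exact (sInf_le (zero_mem_gamma2FBounds_zero Z)).trans zero_le
  rcases eq_or_ne (gamma2F A Z) ⊤ with hA | hA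
  · rw [hA, ENNReal.top_mul hB]
    exact le_top
  have hB_top := gamma2_ne_top B
  simp only [gamma2F_eq_sInf, gamma2_eq_sInf] at hA hB_top ⊢
  exact ENNReal.le_sInf_mul_sInf hA hB_top fun s hs t ht =>
    sInf_le (mul_mem_gamma2FBounds_hadamard hs ht)
end

section
/- Direct-sum property of filtered γ₂: γ₂(A ⊕ B | {Y_j ⊕ Z_j}) = max( γ₂(A | Y), γ₂(B | Z) ), where ⊕ denotes block-diagonal direct sum. -/
/-!
Restricting a factorization of the block-diagonal matrix to the rows and columns of one block
factorizes that block at no greater cost, which gives `≥`. Conversely, factorizations of `A` in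
`ℂ^d₁` and of `B` in `ℂ^d₂` embed isometrically into `ℂ^(d₁ + d₂)` and together factorize the
block-diagonal matrix, because the filters vanish off the diagonal blocks; since `max` distributes
over infima in `ℝ≥0∞`, this gives `≤`.
-/

open Matrix

namespace EuclideanSpace

variable {𝕜 : Type*} [RCLike 𝕜] {m n : ℕ}

noncomputable def appendZero (n : ℕ) (u : EuclideanSpace 𝕜 (Fin m)) :
    EuclideanSpace 𝕜 (Fin (m + n)) :=
  WithLp.toLp 2 (Fin.append u.ofLp 0)

noncomputable def zeroAppend (m : ℕ) (u : EuclideanSpace 𝕜 (Fin n)) :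
    EuclideanSpace 𝕜 (Fin (m + n)) :=
  WithLp.toLp 2 (Fin.append 0 u.ofLp)

@[simp]
lemma inner_appendZero (u v : EuclideanSpace 𝕜 (Fin m)) :
    inner 𝕜 (appendZero n u) (appendZero n v) = inner 𝕜 u v := by
  simp [appendZero, PiLp.inner_apply, Fin.sum_univ_add]

@[simp]
lemma inner_zeroAppend (u v : EuclideanSpace 𝕜 (Fin n)) :
    inner 𝕜 (zeroAppend m u) (zeroAppend m v) = inner 𝕜 u v := by
  simp [zeroAppend, PiLp.inner_apply, Fin.sum_univ_add]

@[simp]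
lemma norm_appendZero (u : EuclideanSpace 𝕜 (Fin m)) : ‖appendZero n u‖ = ‖u‖ := by
  simp [appendZero, EuclideanSpace.norm_eq, Fin.sum_univ_add]

@[simp]
lemma norm_zeroAppend (u : EuclideanSpace 𝕜 (Fin n)) : ‖zeroAppend m u‖ = ‖u‖ := by
  simp [zeroAppend, EuclideanSpace.norm_eq, Fin.sum_univ_add]

end EuclideanSpace

section Gamma2F

variable {X Y ι : Type*} [Fintype ι]

def IsFilteredFactorization {E : Type*} [SeminormedAddCommGroup E] [InnerProductSpace ℂ E]
    (A : Matrix X Y ℂ) (Z : ι → Matrix X Y ℂ) (u : X → ι → E) (v : Y → ι → E) : Prop :=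
  ∀ x y, A x y = ∑ j, Z j x y * inner ℂ (u x j) (v y j)

variable [Fintype X] [Fintype Y]

lemma gamma2F_le_of_isFilteredFactorization {A : Matrix X Y ℂ} {Z : ι → Matrix X Y ℂ} {d : ℕ}
    {u : X → ι → EuclideanSpace ℂ (Fin d)} {v : Y → ι → EuclideanSpace ℂ (Fin d)} {c : ENNReal}
    (h : IsFilteredFactorization A Z u v) (hu : ∀ x, ENNReal.ofReal (∑ j, ‖u x j‖ ^ 2) ≤ c)
    (hv : ∀ y, ENNReal.ofReal (∑ j, ‖v y j‖ ^ 2) ≤ c) : gamma2F A Z ≤ c :=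
  sInf_le ⟨d, u, v, h, hu, hv⟩

lemma gamma2F_submatrix_le {X' Y' : Type*} [Fintype X'] [Fintype Y'] (A : Matrix X Y ℂ)
    (Z : ι → Matrix X Y ℂ) (f : X' → X) (g : Y' → Y) :
    gamma2F (A.submatrix f g) (fun j => (Z j).submatrix f g) ≤ gamma2F A Z :=
  sInf_le_sInf fun _ ⟨d, u, v, h, hu, hv⟩ =>
    ⟨d, u ∘ f, v ∘ g, fun x y => h (f x) (g y), fun x => hu (f x), fun y => hv (g y)⟩

end Gamma2F

section DirectSum

variable {X₁ Y₁ X₂ Y₂ ι : Type*} [Fintype ι]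

lemma IsFilteredFactorization.fromBlocks {E₁ E₂ E : Type*}
    [SeminormedAddCommGroup E₁] [InnerProductSpace ℂ E₁]
    [SeminormedAddCommGroup E₂] [InnerProductSpace ℂ E₂]
    [SeminormedAddCommGroup E] [InnerProductSpace ℂ E]
    {A : Matrix X₁ Y₁ ℂ} {B : Matrix X₂ Y₂ ℂ} {Y : ι → Matrix X₁ Y₁ ℂ} {Z : ι → Matrix X₂ Y₂ ℂ}
    {u₁ : X₁ → ι → E₁} {v₁ : Y₁ → ι → E₁} {u₂ : X₂ → ι → E₂} {v₂ : Y₂ → ι → E₂}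
    (hA : IsFilteredFactorization A Y u₁ v₁) (hB : IsFilteredFactorization B Z u₂ v₂)
    {φ₁ : E₁ → E} {φ₂ : E₂ → E} (hφ₁ : ∀ a b, inner ℂ (φ₁ a) (φ₁ b) = inner ℂ a b)
    (hφ₂ : ∀ a b, inner ℂ (φ₂ a) (φ₂ b) = inner ℂ a b) :
    IsFilteredFactorization (fromBlocks A 0 0 B) (fun j => fromBlocks (Y j) 0 0 (Z j))
      (Sum.elim (fun x j => φ₁ (u₁ x j)) (fun x j => φ₂ (u₂ x j)))
      (Sum.elim (fun y j => φ₁ (v₁ y j)) (fun y j => φ₂ (v₂ y j))) := by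
  rintro (x | x) (y | y)
  · simp [hφ₁, hA x y]
  · simp
  · simp
  · simp [hφ₂, hB x y]

lemma gamma2F_fromBlocks_le [Fintype X₁] [Fintype Y₁] [Fintype X₂] [Fintype Y₂]
    (A : Matrix X₁ Y₁ ℂ) (B : Matrix X₂ Y₂ ℂ) (Y : ι → Matrix X₁ Y₁ ℂ) (Z : ι → Matrix X₂ Y₂ ℂ) :
    gamma2F (fromBlocks A 0 0 B) (fun j => fromBlocks (Y j) 0 0 (Z j)) ≤
      max (gamma2F A Y) (gamma2F B Z) := by
  rw [show max (gamma2F A Y) (gamma2F B Z) = _ from sInf_sup_sInf]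
  refine le_iInf₂ ?_
  rintro ⟨c₁, c₂⟩ ⟨⟨d₁, u₁, v₁, hA, hu₁, hv₁⟩, ⟨d₂, u₂, v₂, hB, hu₂, hv₂⟩⟩
  refine gamma2F_le_of_isFilteredFactorization
    (IsFilteredFactorization.fromBlocks hA hB EuclideanSpace.inner_appendZero
      EuclideanSpace.inner_zeroAppend) ?_ ?_
  · rintro (x | x)
    · simpa using (hu₁ x).trans le_sup_left
    · simpa using (hu₂ x).trans le_sup_right
  · rintro (y | y)
    · simpa using (hv₁ y).trans le_sup_left
    · simpa using (hv₂ y).trans le_sup_right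

end DirectSum

theorem stmt11 {X₁ Y₁ X₂ Y₂ ι : Type*} [Fintype X₁] [Fintype Y₁] [Fintype X₂] [Fintype Y₂]
    [Fintype ι]
    (A : Matrix X₁ Y₁ ℂ) (B : Matrix X₂ Y₂ ℂ)
    (Yf : ι → Matrix X₁ Y₁ ℂ) (Z : ι → Matrix X₂ Y₂ ℂ) :
    gamma2F (Matrix.fromBlocks A 0 0 B) (fun j => Matrix.fromBlocks (Yf j) 0 0 (Z j)) =
      max (gamma2F A Yf) (gamma2F B Z) :=
  le_antisymm (gamma2F_fromBlocks_le A B Yf Z)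
    (max_le (gamma2F_submatrix_le _ _ Sum.inl Sum.inl) (gamma2F_submatrix_le _ _ Sum.inr Sum.inr))
end

section
/- Output condition, necessity: Let {ρ_x} and {σ_x} be unit vectors in a Hilbert space indexed by the same finite set, with Gram matrices ρ and σ. If Re⟨ρ_x, σ_x⟩ ≥ √(1 − ε) for every x, then γ₂(ρ − σ) ≤ 2√ε. -/
/-!
Write `A = ρ - σ` for the difference of the Gram matrices. For any reals `α β` with `α β = 1/2`,
`A x y = ⟪(α (ρ_x + σ_x), β (ρ_x - σ_x)), (β (ρ_y - σ_y), α (ρ_y + σ_y))⟫` in `H × H`, since the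
cross terms `⟪ρ_x, σ_y⟫` cancel. For unit vectors with `Re ⟪ρ_x, σ_x⟫ = r` both factors have
squared norm `α² (2 + 2r) + β² (2 - 2r)`; with `s = √(1 - ε) ≤ r` and the balancing choice
`α² (2 + 2s) = β² (2 - 2s) = √ε` this is at most `2√ε`. For `ε = 0` the vectors coincide and
`A = 0`.
-/

open RCLike

lemma gamma2_le_of_inner_eq {X Y : Type*} [Fintype X] [Fintype Y]
    {E : Type*} [NormedAddCommGroup E] [InnerProductSpace ℂ E]
    (A : Matrix X Y ℂ) (u : X → E) (v : Y → E) (hA : ∀ x y, A x y = inner ℂ (u x) (v y))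
    (c : ℝ) (hu : ∀ x, ‖u x‖ ^ 2 ≤ c) (hv : ∀ y, ‖v y‖ ^ 2 ≤ c) :
    gamma2 A ≤ ENNReal.ofReal c := by
  set S := Submodule.span ℂ (Set.range u ∪ Set.range v)
  have : FiniteDimensional ℂ S :=
    FiniteDimensional.span_of_finite ℂ ((Set.finite_range u).union (Set.finite_range v))
  let b := stdOrthonormalBasis ℂ S
  have hu_mem (x : X) : u x ∈ S := Submodule.subset_span (Or.inl ⟨x, rfl⟩)
  have hv_mem (y : Y) : v y ∈ S := Submodule.subset_span (Or.inr ⟨y, rfl⟩)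
  refine sInf_le ⟨Module.finrank ℂ S, fun x => b.repr ⟨u x, hu_mem x⟩,
    fun y => b.repr ⟨v y, hv_mem y⟩, fun x y => ?_, fun x => ?_, fun y => ?_⟩
  · rw [hA, b.repr.inner_map_map]
    rfl
  · rw [LinearIsometryEquiv.norm_map]
    exact ENNReal.ofReal_le_ofReal (hu x)
  · rw [LinearIsometryEquiv.norm_map]
    exact ENNReal.ofReal_le_ofReal (hv y)

section GramDifference

variable {X : Type*} [Fintype X] {H : Type*} [NormedAddCommGroup H] [InnerProductSpace ℂ H]

lemma gamma2_gram_sub_le (ρv σv : X → H) {α β c : ℝ} (hαβ : α * β = 1 / 2)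
    (hc : ∀ x, α ^ 2 * ‖ρv x + σv x‖ ^ 2 + β ^ 2 * ‖ρv x - σv x‖ ^ 2 ≤ c) :
    gamma2 (Matrix.of fun x y => inner ℂ (ρv x) (ρv y) - inner ℂ (σv x) (σv y)) ≤
      ENNReal.ofReal c := by
  let u : X → WithLp 2 (H × H) := fun x =>
    WithLp.toLp 2 ((α : ℂ) • (ρv x + σv x), (β : ℂ) • (ρv x - σv x))
  let v : X → WithLp 2 (H × H) := fun y =>
    WithLp.toLp 2 ((β : ℂ) • (ρv y - σv y), (α : ℂ) • (ρv y + σv y))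
  have hnorm (a b : ℝ) (p q : H) :
      ‖WithLp.toLp 2 ((a : ℂ) • p, (b : ℂ) • q)‖ ^ 2 = a ^ 2 * ‖p‖ ^ 2 + b ^ 2 * ‖q‖ ^ 2 := by
    rw [WithLp.prod_norm_sq_eq_of_L2, WithLp.toLp_fst, WithLp.toLp_snd, norm_smul, norm_smul,
      Complex.norm_real, Complex.norm_real, Real.norm_eq_abs, Real.norm_eq_abs, mul_pow, mul_pow,
      sq_abs, sq_abs]
  refine gamma2_le_of_inner_eq _ u v (fun x y => ?_) c (fun x => ?_) (fun y => ?_)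
  · have hαβ' : (α : ℂ) * β = 1 / 2 := by
      rw [← Complex.ofReal_mul, hαβ]
      norm_num
    simp only [u, v, Matrix.of_apply, WithLp.prod_inner_apply, inner_smul_left, inner_smul_right, Complex.conj_ofReal, inner_add_left, inner_add_right,
      inner_sub_left, inner_sub_right]
    linear_combination (2 * inner ℂ (σv x) (σv y) - 2 * inner ℂ (ρv x) (ρv y)) * hαβ'
  · exact (hnorm _ _ _ _).trans_le (hc x)
  · rw [hnorm]
    linarith [hc y]

end GramDifference

section UnitVectors

variable {H : Type*} [NormedAddCommGroup H] [InnerProductSpace ℂ H] {a b : H}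

lemma norm_add_sq_of_norm_eq_one (ha : ‖a‖ = 1) (hb : ‖b‖ = 1) :
    ‖a + b‖ ^ 2 = 2 + 2 * re (inner ℂ a b) := by
  rw [norm_add_sq (𝕜 := ℂ), ha, hb]
  ring

lemma norm_sub_sq_of_norm_eq_one (ha : ‖a‖ = 1) (hb : ‖b‖ = 1) :
    ‖a - b‖ ^ 2 = 2 - 2 * re (inner ℂ a b) := by
  rw [norm_sub_sq (𝕜 := ℂ), ha, hb]
  ring

lemma eq_of_norm_eq_one_of_one_le_re_inner (ha : ‖a‖ = 1) (hb : ‖b‖ = 1)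
    (hab : 1 ≤ re (inner ℂ a b)) : a = b := by
  have h : ‖a - b‖ ^ 2 ≤ 0 := by
    rw [norm_sub_sq_of_norm_eq_one ha hb]
    linarith
  exact sub_eq_zero.mp (norm_eq_zero.mp (pow_eq_zero_iff two_ne_zero |>.mp
    (le_antisymm h (sq_nonneg _))))

end UnitVectors

lemma exists_mul_eq_half_forall_le {ε : ℝ} (hε0 : 0 < ε) (hε1 : ε ≤ 1) :
    ∃ α β : ℝ, α * β = 1 / 2 ∧
      ∀ r, √(1 - ε) ≤ r → α ^ 2 * (2 + 2 * r) + β ^ 2 * (2 - 2 * r) ≤ 2 * √ε := by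
  set s := √(1 - ε)
  set e := √ε
  have he : 0 < e := Real.sqrt_pos.mpr hε0
  have hs0 : 0 ≤ s := Real.sqrt_nonneg _
  have hes : e ^ 2 + s ^ 2 = 1 := by
    rw [Real.sq_sqrt hε0.le, Real.sq_sqrt (by linarith)]
    ring
  have hs1 : s < 1 := by nlinarith
  set α := √(e / (2 * (1 + s)))
  have hα : 0 < α := Real.sqrt_pos.mpr (by positivity)
  have hα2 : α ^ 2 = e / (2 * (1 + s)) := Real.sq_sqrt (by positivity)
  have hβ2 : (2 * α)⁻¹ ^ 2 = (1 + s) / (2 * e) := by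
    rw [inv_pow, mul_pow, hα2]
    field_simp
  refine ⟨α, (2 * α)⁻¹, by field_simp, fun r hr => ?_⟩
  -- the two terms balance at `r = s`, and the expression decreases in `r` since `α² ≤ β²`
  have h_plus : α ^ 2 * (2 + 2 * s) = e := by
    rw [hα2]
    field_simp
  have h_minus : (2 * α)⁻¹ ^ 2 * (2 - 2 * s) = e := by
    rw [hβ2]
    field_simp
    linear_combination -hes
  have h_le : α ^ 2 ≤ (2 * α)⁻¹ ^ 2 := by
    rw [hα2, hβ2, div_le_div_iff₀ (by positivity) (by positivity)]
    nlinarith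
  nlinarith

theorem stmt15 {X : Type*} [Fintype X] {H : Type*} [NormedAddCommGroup H]
    [InnerProductSpace ℂ H]
    (ρv σv : X → H) (hρ : ∀ x, ‖ρv x‖ = 1) (hσ : ∀ x, ‖σv x‖ = 1)
    (ε : ℝ) (hε0 : 0 ≤ ε) (hε1 : ε ≤ 1)
    (h : ∀ x, Real.sqrt (1 - ε) ≤ ((inner ℂ (ρv x) (σv x) : ℂ)).re) :
    gamma2 (Matrix.of fun x y =>
        (inner ℂ (ρv x) (ρv y) : ℂ) - (inner ℂ (σv x) (σv y) : ℂ)) ≤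
      ENNReal.ofReal (2 * Real.sqrt ε) := by
  rcases hε0.eq_or_lt with rfl | hε
  · have hρσ (x : X) : ρv x = σv x :=
      eq_of_norm_eq_one_of_one_le_re_inner (hρ x) (hσ x) (by simpa using h x)
    refine gamma2_le_of_inner_eq (E := ℂ) _ 0 0 (fun x y => ?_) _ (fun _ => ?_) (fun _ => ?_) <;>
      simp [hρσ]
  · obtain ⟨α, β, hαβ, hbound⟩ := exists_mul_eq_half_forall_le hε hε1
    refine gamma2_gram_sub_le ρv σv hαβ fun x => ?_
    rw [norm_add_sq_of_norm_eq_one (hρ x) (hσ x), norm_sub_sq_of_norm_eq_one (hρ x) (hσ x)]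
    exact hbound _ (h x)
end

section
/- Output condition, sufficiency: Let {ρ_x}, {σ_x} be finite families of unit vectors in a Hilbert space H with Gram matrices ρ, σ. If γ₂(ρ − σ) ≤ ε, then there exists a unitary U on H (or on H extended by an ancilla) such that Re⟨ρ_x, U σ_x⟩ ≥ 1 − √(2ε) for all x. -/
/-!
Factor `ρ - σ = (⟪α x, β y⟫)` with `‖α x‖, ‖β y‖ ≤ √(2ε)`. Since `ρ - σ` is Hermitian,
`⟪α x, β y⟫ = ⟪β x, α y⟫`, which is exactly what makes the extended families
`σ x ⊕ (α x + β x) / 2` and `ρ x ⊕ (α x - β x) / 2` of `H ⊕ ℂᵉ` have the same Gram matrix; so some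
unitary `W` maps the first onto the second. Then
`⟪ρ x ⊕ 0, W (σ x ⊕ 0)⟫ = 1 - ⟪ρ x ⊕ 0, W (0 ⊕ (α x + β x) / 2)⟫`, and the last term has modulus
at most `‖(α x + β x) / 2‖ ≤ √(2ε)`.
-/

open scoped InnerProductSpace

section GramMatrix

variable {𝕜 E X : Type*} [RCLike 𝕜] [NormedAddCommGroup E] [InnerProductSpace 𝕜 E] [Fintype X]

lemma inner_linearCombination_eq_of_inner_eq {u v : X → E}
    (h : ∀ x y, ⟪u x, u y⟫_𝕜 = ⟪v x, v y⟫_𝕜) (a b : X → 𝕜) :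
    ⟪Fintype.linearCombination 𝕜 u a, Fintype.linearCombination 𝕜 u b⟫_𝕜 =
      ⟪Fintype.linearCombination 𝕜 v a, Fintype.linearCombination 𝕜 v b⟫_𝕜 := by
  simp only [Fintype.linearCombination_apply, inner_sum, sum_inner, inner_smul_left,
    inner_smul_right, h]

lemma norm_linearCombination_eq_of_inner_eq {u v : X → E}
    (h : ∀ x y, ⟪u x, u y⟫_𝕜 = ⟪v x, v y⟫_𝕜) (a : X → 𝕜) :
    ‖Fintype.linearCombination 𝕜 u a‖ = ‖Fintype.linearCombination 𝕜 v a‖ := by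
  rw [norm_eq_sqrt_re_inner (𝕜 := 𝕜), norm_eq_sqrt_re_inner (𝕜 := 𝕜),
    inner_linearCombination_eq_of_inner_eq h]

theorem exists_linearIsometryEquiv_apply_eq_of_inner_eq [FiniteDimensional 𝕜 E] {u v : X → E}
    (h : ∀ x y, ⟪u x, u y⟫_𝕜 = ⟪v x, v y⟫_𝕜) :
    ∃ W : E ≃ₗᵢ[𝕜] E, ∀ x, W (u x) = v x := by
  classical
  set Ψ := Fintype.linearCombination 𝕜 u
  set Φ := Fintype.linearCombination 𝕜 v
  have hΦΨ : ∀ a b, Ψ a = Ψ b → Φ a = Φ b := fun a b hab => by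
    rw [← sub_eq_zero, ← map_sub, ← norm_eq_zero, ← norm_linearCombination_eq_of_inner_eq h,
      map_sub, hab, sub_self, norm_zero]
  obtain ⟨s, hs⟩ := Ψ.rangeRestrict.exists_rightInverse_of_surjective Ψ.range_rangeRestrict
  have hΨs : ∀ w, Ψ (s w) = w := fun w => congrArg Subtype.val (LinearMap.congr_fun hs w)
  let L : LinearMap.range Ψ →ₗᵢ[𝕜] E :=
    { toLinearMap := Φ ∘ₗ s
      norm_map' := fun w => by
        rw [LinearMap.comp_apply, ← norm_linearCombination_eq_of_inner_eq h, hΨs]; rfl }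
  refine ⟨L.extend.toLinearIsometryEquiv rfl, fun x => ?_⟩
  have hux : Ψ (Pi.single x 1) = u x := by simp [Ψ, Fintype.linearCombination_apply_single]
  have hvx : Φ (Pi.single x 1) = v x := by simp [Φ, Fintype.linearCombination_apply_single]
  rw [LinearIsometry.coe_toLinearIsometryEquiv, ← hux, ← hvx]
  exact (L.extend_apply ⟨_, LinearMap.mem_range_self Ψ _⟩).trans (hΦΨ _ _ (hΨs _))

end GramMatrix

section Ancilla

variable {𝕜 E G X : Type*} [RCLike 𝕜] [NormedAddCommGroup E] [InnerProductSpace 𝕜 E]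
  [NormedAddCommGroup G] [InnerProductSpace 𝕜 G]

lemma Matrix.IsHermitian.inner_comm_of_apply_eq_inner {A : Matrix X X 𝕜} (hA : A.IsHermitian)
    {α β : X → G} (hαβ : ∀ x y, A x y = ⟪α x, β y⟫_𝕜) (x y : X) :
    ⟪α x, β y⟫_𝕜 = ⟪β x, α y⟫_𝕜 := by
  rw [← hαβ, ← hA.apply, hαβ, ← inner_conj_symm]
  exact star_star _

variable (𝕜 E G) in
noncomputable def inlL2 : E →ₗᵢ[𝕜] WithLp 2 (E × G) where
  toLinearMap := (WithLp.linearEquiv 2 𝕜 (E × G)).symm.toLinearMap ∘ₗ LinearMap.inl 𝕜 E G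
  norm_map' := WithLp.norm_toLp_fst 2 E G

@[simp]
lemma inlL2_apply (x : E) : inlL2 𝕜 E G x = WithLp.toLp 2 (x, 0) := rfl

lemma inner_toLp_eq_of_inner_sub_inner_eq {ρ σ : X → E} {α β : X → G}
    (hαβ : ∀ x y, ⟪ρ x, ρ y⟫_𝕜 - ⟪σ x, σ y⟫_𝕜 = ⟪α x, β y⟫_𝕜)
    (hcomm : ∀ x y, ⟪α x, β y⟫_𝕜 = ⟪β x, α y⟫_𝕜) (x y : X) :
    ⟪WithLp.toLp 2 (σ x, (2 : 𝕜)⁻¹ • (α x + β x)), WithLp.toLp 2 (σ y, (2 : 𝕜)⁻¹ • (α y + β y))⟫_𝕜 =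
      ⟪WithLp.toLp 2 (ρ x, (2 : 𝕜)⁻¹ • (α x - β x)),
        WithLp.toLp 2 (ρ y, (2 : 𝕜)⁻¹ • (α y - β y))⟫_𝕜 := by
  simp only [WithLp.prod_inner_apply, inner_smul_left, inner_smul_right, inner_add_left,
    inner_add_right, inner_sub_left, inner_sub_right, map_inv₀, map_ofNat]
  linear_combination (-1 : 𝕜) * hαβ x y - (1 / 2 : 𝕜) * hcomm x y

lemma one_sub_norm_le_re_inner {F : Type*} [NormedAddCommGroup F] [InnerProductSpace 𝕜 F]
    (W : F ≃ₗᵢ[𝕜] F) {r s t t' : F} (hW : W (s + t) = r + t') (hr : ‖r‖ = 1)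
    (hrt' : ⟪r, t'⟫_𝕜 = 0) : 1 - ‖t‖ ≤ RCLike.re ⟪r, W s⟫_𝕜 := by
  have hWs : W s = r + t' - W t := by rw [← hW, map_add, add_sub_cancel_right]
  have hbound : RCLike.re ⟪r, W t⟫_𝕜 ≤ ‖t‖ := by
    simpa [hr] using re_inner_le_norm r (W t)
  rw [hWs, inner_sub_right, inner_add_right, hrt', inner_self_eq_norm_sq_to_K, hr]
  simpa using sub_le_sub_left hbound 1

theorem exists_linearIsometryEquiv_one_sub_norm_le_re_inner [FiniteDimensional 𝕜 E]
    [FiniteDimensional 𝕜 G] [Fintype X] {ρ σ : X → E} (hρ : ∀ x, ‖ρ x‖ = 1) {α β : X → G}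
    (hαβ : ∀ x y, ⟪ρ x, ρ y⟫_𝕜 - ⟪σ x, σ y⟫_𝕜 = ⟪α x, β y⟫_𝕜) :
    ∃ W : WithLp 2 (E × G) ≃ₗᵢ[𝕜] WithLp 2 (E × G), ∀ x,
      1 - ‖(2 : 𝕜)⁻¹ • (α x + β x)‖ ≤ RCLike.re ⟪inlL2 𝕜 E G (ρ x), W (inlL2 𝕜 E G (σ x))⟫_𝕜 := by
  have hcomm := ((Matrix.isHermitian_gram 𝕜 ρ).sub
    (Matrix.isHermitian_gram 𝕜 σ)).inner_comm_of_apply_eq_inner hαβ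
  obtain ⟨W, hW⟩ := exists_linearIsometryEquiv_apply_eq_of_inner_eq
    (inner_toLp_eq_of_inner_sub_inner_eq hαβ hcomm)
  refine ⟨W, fun x => ?_⟩
  have hsplit : inlL2 𝕜 E G (σ x) + WithLp.toLp 2 (0, (2 : 𝕜)⁻¹ • (α x + β x)) =
      WithLp.toLp 2 (σ x, (2 : 𝕜)⁻¹ • (α x + β x)) := by
    simp [← WithLp.toLp_add]
  have := one_sub_norm_le_re_inner W (r := inlL2 𝕜 E G (ρ x))
    (t' := WithLp.toLp 2 (0, (2 : 𝕜)⁻¹ • (α x - β x)))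
    (by rw [hsplit, hW]; simp [← WithLp.toLp_add]) (by simp [hρ]) (by simp)
  rwa [WithLp.norm_toLp_snd] at this

end Ancilla

section Gamma2

variable {X Y : Type*} [Fintype X] [Fintype Y] {A : Matrix X Y ℂ}

lemma exists_factorization_of_gamma2_lt {δ : ℝ} (h : gamma2 A < ENNReal.ofReal δ) :
    ∃ (e : ℕ) (α : X → EuclideanSpace ℂ (Fin e)) (β : Y → EuclideanSpace ℂ (Fin e)),
      (∀ x y, A x y = ⟪α x, β y⟫_ℂ) ∧ (∀ x, ‖α x‖ ≤ √δ) ∧ (∀ y, ‖β y‖ ≤ √δ) := by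
  obtain ⟨c, ⟨e, α, β, hA, hα, hβ⟩, hc⟩ := sInf_lt_iff.mp h
  have hsq {r : ℝ} (hr : ENNReal.ofReal (r ^ 2) ≤ c) (hr0 : 0 ≤ r) : r ≤ √δ :=
    Real.le_sqrt_of_sq_le ((ENNReal.ofReal_lt_ofReal_iff'.mp (hr.trans_lt hc)).1.le)
  exact ⟨e, α, β, hA, fun x => hsq (hα x) (norm_nonneg _), fun y => hsq (hβ y) (norm_nonneg _)⟩

lemma norm_apply_le_of_gamma2_le {ε : ℝ} (hε : 0 ≤ ε) (h : gamma2 A ≤ ENNReal.ofReal ε)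
    (x : X) (y : Y) : ‖A x y‖ ≤ ε := by
  refine le_of_forall_gt_imp_ge_of_dense fun δ hδ => ?_
  obtain ⟨e, α, β, hA, hα, hβ⟩ := exists_factorization_of_gamma2_lt
    (h.trans_lt ((ENNReal.ofReal_lt_ofReal_iff (hε.trans_lt hδ)).mpr hδ))
  calc ‖A x y‖ ≤ ‖α x‖ * ‖β y‖ := by rw [hA]; exact norm_inner_le_norm _ _
    _ ≤ √δ * √δ := by gcongr <;> simp [hα, hβ]
    _ = δ := Real.mul_self_sqrt (hε.trans hδ.le)

/- The infimum defining `γ₂` need not be attained: for `ε > 0` the slack `2 ε` leaves room for a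
near-optimal factorization, and for `ε = 0` the matrix vanishes. -/
lemma exists_factorization_of_gamma2_le {ε : ℝ} (hε : 0 ≤ ε) (h : gamma2 A ≤ ENNReal.ofReal ε) :
    ∃ (e : ℕ) (α : X → EuclideanSpace ℂ (Fin e)) (β : Y → EuclideanSpace ℂ (Fin e)),
      (∀ x y, A x y = ⟪α x, β y⟫_ℂ) ∧ (∀ x, ‖α x‖ ≤ √(2 * ε)) ∧ (∀ y, ‖β y‖ ≤ √(2 * ε)) := by
  rcases hε.eq_or_lt with rfl | hε
  · refine ⟨0, 0, 0, fun x y => ?_, fun _ => by simp, fun _ => by simp⟩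
    simpa using norm_apply_le_of_gamma2_le le_rfl h x y
  · exact exists_factorization_of_gamma2_lt
      (h.trans_lt ((ENNReal.ofReal_lt_ofReal_iff (by positivity)).mpr (by linarith)))

end Gamma2

theorem stmt16_general {X : Type*} [Fintype X] {d : ℕ}
    (ρv σv : X → EuclideanSpace ℂ (Fin d))
    (hρ : ∀ x, ‖ρv x‖ = 1)
    (ε : ℝ) (hε : 0 ≤ ε)
    (h : gamma2 (Matrix.of fun x y =>
        (inner ℂ (ρv x) (ρv y) : ℂ) - (inner ℂ (σv x) (σv y) : ℂ)) ≤ ENNReal.ofReal ε) :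
    ∃ (d' : ℕ) (em : EuclideanSpace ℂ (Fin d) →ₗᵢ[ℂ] EuclideanSpace ℂ (Fin d'))
      (U : EuclideanSpace ℂ (Fin d') ≃ₗᵢ[ℂ] EuclideanSpace ℂ (Fin d')),
      ∀ x, 1 - Real.sqrt (2 * ε) ≤ ((inner ℂ (em (ρv x)) (U (em (σv x))) : ℂ)).re := by
  obtain ⟨e, α, β, hαβ, hα, hβ⟩ := exists_factorization_of_gamma2_le hε h
  obtain ⟨W, hW⟩ := exists_linearIsometryEquiv_one_sub_norm_le_re_inner hρ hαβ
  let J := (stdOrthonormalBasis ℂ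
    (WithLp 2 (EuclideanSpace ℂ (Fin d) × EuclideanSpace ℂ (Fin e)))).repr
  refine ⟨_, J.toLinearIsometry.comp (inlL2 ℂ _ _), J.symm.trans (W.trans J), fun x => ?_⟩
  have hnorm : ‖(2 : ℂ)⁻¹ • (α x + β x)‖ ≤ √(2 * ε) := by
    calc ‖(2 : ℂ)⁻¹ • (α x + β x)‖ ≤ 2⁻¹ * (‖α x‖ + ‖β x‖) := by
          rw [norm_smul, norm_inv, RCLike.norm_ofNat]
          gcongr
          exact norm_add_le _ _
      _ ≤ √(2 * ε) := by linarith [hα x, hβ x]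
  simpa [LinearIsometryEquiv.inner_map_map] using (sub_le_sub_left hnorm 1).trans (hW x)

theorem stmt16 {X : Type*} [Fintype X] {d : ℕ}
    (ρv σv : X → EuclideanSpace ℂ (Fin d))
    (hρ : ∀ x, ‖ρv x‖ = 1) (hσ : ∀ x, ‖σv x‖ = 1)
    (ε : ℝ) (hε : 0 ≤ ε)
    (h : gamma2 (Matrix.of fun x y =>
        (inner ℂ (ρv x) (ρv y) : ℂ) - (inner ℂ (σv x) (σv y) : ℂ)) ≤ ENNReal.ofReal ε) :
    ∃ (d' : ℕ) (em : EuclideanSpace ℂ (Fin d) →ₗᵢ[ℂ] EuclideanSpace ℂ (Fin d'))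
      (U : EuclideanSpace ℂ (Fin d') ≃ₗᵢ[ℂ] EuclideanSpace ℂ (Fin d')),
      ∀ x, 1 - Real.sqrt (2 * ε) ≤ ((inner ℂ (em (ρv x)) (U (em (σv x))) : ℂ)).re :=
  stmt16_general ρv σv hρ ε hε h
end

section
/- Balancing an optimal adversary solution: Let g : C_0 → {0,1} (C_0 ⊆ C^m finite) with dual adversary value d_g = ADV±(g). Then there exists an optimal feasible solution (Ω, W) of the dual SDP (Ω diagonal PSD with trace 1, W ∘ G = 0, Ω ± W ∘ Δ_j ⪰ 0 for all j, ⟨J, W⟩ = d_g) that additionally satisfies d_g Ω ± W ⪰ 0 and Σ_{x: g(x)=1} Ω_{x,x} = Σ_{x: g(x)=0} Ω_{x,x} = 1/2. -/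
open scoped Matrix

/-- Feasibility for the dual adversary SDP of a boolean function `g`. -/
def AdvDualFeasible {X ι C : Type*} [Fintype X] [DecidableEq C]
    (inp : X → ι → C) (g : X → Bool) (Ω W : Matrix X X ℝ) : Prop :=
  Ω.IsDiag ∧ Ω.PosSemidef ∧ Ω.trace = 1 ∧ W.IsSymm ∧
  (∀ x y, g x = g y → W x y = 0) ∧
  (∀ j, (Ω + Matrix.hadamard W
      (Matrix.of fun x y => if inp x j = inp y j then 0 else 1)).PosSemidef ∧
    (Ω - Matrix.hadamard W
      (Matrix.of fun x y => if inp x j = inp y j then 0 else 1)).PosSemidef)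

/-!
Feasibility is preserved by the congruence `(Ω, W) ↦ c • (DΩD, DWD)` with `D = diagonal v` and
`c = (vᵀΩv)⁻¹`, so the optimality bound gives `vᵀWv ≤ dg · vᵀΩv` whenever `vᵀΩv > 0`, and then for
every `v` by a limiting argument: this is `dg • Ω - W ⪰ 0`. Conjugating by the `±1` sign pattern of
`g` negates `W`, which lives only between the two classes, and yields `dg • Ω + W ⪰ 0`. Testing
`dg • Ω - W ⪰ 0` against vectors constant on the classes shows that `Ω` puts equal weight on them
when `dg > 0`; when `dg = 0`, any balanced diagonal `Ω` together with `W = 0` is optimal.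
-/

open Matrix Finset Filter Topology

section QuadraticForms

variable {X : Type*} [Fintype X]

lemma Matrix.IsDiag.dotProduct_mulVec_self {A : Matrix X X ℝ} (hA : A.IsDiag) (v : X → ℝ) :
    v ⬝ᵥ A *ᵥ v = ∑ x, A x x * v x ^ 2 := by
  classical
  rw [← hA.diagonal_diag]
  simp only [dotProduct, mulVec_diagonal, diag_apply, diagonal_apply_eq]
  exact sum_congr rfl fun x _ => by ring

lemma Matrix.trace_diagonal_mul_mul_diagonal [DecidableEq X] (A : Matrix X X ℝ) (d : X → ℝ) :
    (diagonal d * A * diagonal d).trace = ∑ x, A x x * d x ^ 2 := by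
  simp only [trace, diag_apply, mul_diagonal, diagonal_mul]
  exact sum_congr rfl fun x _ => by ring

lemma Matrix.sum_sum_diagonal_mul_mul_diagonal [DecidableEq X] (A : Matrix X X ℝ) (d : X → ℝ) :
    ∑ x, ∑ y, (diagonal d * A * diagonal d) x y = d ⬝ᵥ A *ᵥ d := by
  simp only [dotProduct, mulVec, mul_diagonal, diagonal_mul, mul_sum]
  exact sum_congr rfl fun x _ => sum_congr rfl fun y _ => by ring

lemma Matrix.hadamard_diagonal_mul_mul_diagonal [DecidableEq X] (A B : Matrix X X ℝ) (d : X → ℝ) :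
    (diagonal d * A * diagonal d) ⊙ B = diagonal d * (A ⊙ B) * diagonal d := by
  ext x y
  simp only [hadamard_apply, mul_diagonal, diagonal_mul]
  ring

lemma Matrix.PosSemidef.smul_diagonal_mul_mul_diagonal [DecidableEq X] {A : Matrix X X ℝ}
    (hA : A.PosSemidef) {c : ℝ} (hc : 0 ≤ c) (d : X → ℝ) :
    (c • (diagonal d * A * diagonal d)).PosSemidef := by
  simpa [diagonal_conjTranspose] using (hA.mul_mul_conjTranspose_same (diagonal d)).smul hc

/-- Where `Ω` vanishes, move `v` off its kernel along `u` and pass to the limit. -/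
lemma Matrix.PosSemidef.dotProduct_mulVec_nonneg_of_imp {Ω M : Matrix X X ℝ}
    (hΩ : Ω.PosSemidef) {u : X → ℝ} (hu : 0 < u ⬝ᵥ Ω *ᵥ u)
    (hM : ∀ v, 0 < v ⬝ᵥ Ω *ᵥ v → 0 ≤ v ⬝ᵥ M *ᵥ v) (v : X → ℝ) : 0 ≤ v ⬝ᵥ M *ᵥ v := by
  have hv : 0 ≤ v ⬝ᵥ Ω *ᵥ v := by simpa using hΩ.dotProduct_mulVec_nonneg v
  rcases hv.lt_or_eq with hpos | hzero
  · exact hM v hpos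
  have hker : Ω *ᵥ v = 0 := (hΩ.dotProduct_mulVec_zero_iff v).1 (by simpa using hzero.symm)
  have hker' : v ᵥ* Ω = 0 := by
    rw [← hker, ← vecMul_transpose, ← conjTranspose_eq_transpose_of_trivial, hΩ.1]
  have hpert : ∀ ε : ℝ, (v + ε • u) ⬝ᵥ Ω *ᵥ (v + ε • u) = ε ^ 2 * (u ⬝ᵥ Ω *ᵥ u) := by
    intro ε
    rw [mulVec_add, hker, zero_add, dotProduct_mulVec, add_vecMul, hker', zero_add,
      ← dotProduct_mulVec, smul_dotProduct, mulVec_smul, dotProduct_smul, smul_eq_mul,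
      smul_eq_mul]
    ring
  have hlim : Tendsto (fun ε : ℝ => (v + ε • u) ⬝ᵥ M *ᵥ (v + ε • u)) (𝓝[>] 0)
      (𝓝 (v ⬝ᵥ M *ᵥ v)) := by
    have hcont : Continuous fun ε : ℝ => (v + ε • u) ⬝ᵥ M *ᵥ (v + ε • u) := by fun_prop
    simpa using (hcont.tendsto 0).mono_left nhdsWithin_le_nhds
  exact ge_of_tendsto hlim <| eventually_nhdsWithin_of_forall fun ε (hε : 0 < ε) =>
    hM _ (by rw [hpert]; positivity)

end QuadraticForms

section Bipartite

variable {X : Type*} [Fintype X] {g : X → Bool} {W : Matrix X X ℝ}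

lemma sum_mul_comp_bool (g : X → Bool) (a : X → ℝ) (f : Bool → ℝ) :
    ∑ x, a x * f (g x) = (∑ x ∈ univ.filter (fun x => g x = true), a x) * f true +
      (∑ x ∈ univ.filter (fun x => g x = false), a x) * f false := by
  rw [sum_mul, sum_mul, ← sum_filter_add_sum_filter_not univ (fun x => g x = true)]
  congr 1
  · exact sum_congr rfl fun x hx => by rw [(mem_filter.1 hx).2]
  · refine sum_congr (by simp) fun x hx => ?_
    rw [(mem_filter.1 hx).2]

lemma dotProduct_mulVec_comp_of_bipartite (hW : ∀ x y, g x = g y → W x y = 0)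
    (c : Bool → ℝ) : (c ∘ g) ⬝ᵥ W *ᵥ (c ∘ g) = c true * c false * ∑ x, ∑ y, W x y := by
  simp only [dotProduct, mulVec, Function.comp_apply, mul_sum]
  refine sum_congr rfl fun x _ => sum_congr rfl fun y _ => ?_
  by_cases hxy : g x = g y
  · simp [hW x y hxy]
  · cases hx : g x <;> cases hy : g y <;> simp_all <;> ring

lemma diagonal_sign_mul_sub_mul_diagonal_sign [DecidableEq X] {A : Matrix X X ℝ}
    (hA : A.IsDiag) (hW : ∀ x y, g x = g y → W x y = 0) :
    diagonal (fun x => if g x then -1 else 1) * (A - W) *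
      diagonal (fun x => if g x then -1 else 1) = A + W := by
  ext x y
  simp only [mul_diagonal, diagonal_mul, Matrix.sub_apply, Matrix.add_apply]
  by_cases hxy : g x = g y
  · rw [hW x y hxy]
    rcases eq_or_ne x y with rfl | hne
    · split_ifs <;> ring
    · simp [hA hne]
  · have hne : x ≠ y := fun h => hxy (h ▸ rfl)
    rw [hA hne]
    cases hx : g x <;> cases hy : g y <;> simp_all

end Bipartite

namespace AdvDualFeasible

variable {X ι C : Type*} [Fintype X] [DecidableEq C] {inp : X → ι → C} {g : X → Bool}
  {Ω W : Matrix X X ℝ} {dg : ℝ}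

lemma of_zero (hd : Ω.IsDiag) (hp : Ω.PosSemidef) (ht : Ω.trace = 1) :
    AdvDualFeasible inp g Ω 0 :=
  ⟨hd, hp, ht, isSymm_zero, fun _ _ _ => rfl, fun _ => by
    simp only [zero_hadamard, add_zero, sub_zero]
    exact ⟨hp, hp⟩⟩

lemma smul_diagonal_conj [DecidableEq X] (h : AdvDualFeasible inp g Ω W) {c : ℝ} (hc : 0 ≤ c)
    (d : X → ℝ) (htr : c * (d ⬝ᵥ Ω *ᵥ d) = 1) :
    AdvDualFeasible inp g (c • (diagonal d * Ω * diagonal d))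
      (c • (diagonal d * W * diagonal d)) := by
  obtain ⟨hdiag, hpsd, -, hsymm, hbip, hΔ⟩ := h
  refine ⟨?_, hpsd.smul_diagonal_mul_mul_diagonal hc d, ?_, ?_, ?_, fun j => ?_⟩
  · exact fun x y hxy => by simp [hdiag hxy]
  · rw [trace_smul, trace_diagonal_mul_mul_diagonal, ← hdiag.dotProduct_mulVec_self, smul_eq_mul,
      htr]
  · refine IsSymm.smul (IsSymm.ext fun x y => ?_) c
    simp only [mul_diagonal, diagonal_mul, hsymm.apply x y]
    ring
  · exact fun x y hxy => by simp [hbip x y hxy]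
  · simp only [smul_hadamard, hadamard_diagonal_mul_mul_diagonal, ← smul_add, ← smul_sub,
      ← Matrix.add_mul, ← Matrix.mul_add, ← Matrix.sub_mul, ← Matrix.mul_sub]
    exact ⟨(hΔ j).1.smul_diagonal_mul_mul_diagonal hc d,
      (hΔ j).2.smul_diagonal_mul_mul_diagonal hc d⟩

lemma posSemidef_smul_sub (h : AdvDualFeasible inp g Ω W)
    (hbound : ∀ Ω W, AdvDualFeasible inp g Ω W → ∑ x, ∑ y, W x y ≤ dg) :
    (dg • Ω - W).PosSemidef := by
  classical
  have ⟨hdiag, hpsd, htr, hsymm, _⟩ := h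
  have hone : 0 < (1 : X → ℝ) ⬝ᵥ Ω *ᵥ 1 := by
    simp only [trace, diag_apply] at htr
    simp [hdiag.dotProduct_mulVec_self, htr]
  have hherm : (dg • Ω - W).IsHermitian :=
    (hpsd.1.smul (IsSelfAdjoint.all dg)).sub (isHermitian_iff_isSymm.2 hsymm)
  refine .of_dotProduct_mulVec_nonneg hherm fun v => ?_
  rw [star_trivial]
  refine hpsd.dotProduct_mulVec_nonneg_of_imp hone (fun w hw => ?_) v
  have hscaled := hbound _ _ (h.smul_diagonal_conj (inv_nonneg.2 hw.le) w (inv_mul_cancel₀ hw.ne'))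
  simp only [Matrix.smul_apply, smul_eq_mul, ← mul_sum, sum_sum_diagonal_mul_mul_diagonal,
    inv_mul_le_iff₀ hw] at hscaled
  rw [sub_mulVec, smul_mulVec, dotProduct_sub, dotProduct_smul, smul_eq_mul]
  linarith

lemma posSemidef_smul_add [DecidableEq X] (h : AdvDualFeasible inp g Ω W)
    (hsub : (dg • Ω - W).PosSemidef) : (dg • Ω + W).PosSemidef := by
  obtain ⟨hdiag, -, -, -, hbip, -⟩ := h
  rw [← diagonal_sign_mul_sub_mul_diagonal_sign (hdiag.smul dg) hbip]
  simpa [diagonal_conjTranspose] using hsub.mul_mul_conjTranspose_same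
    (diagonal fun x => if g x then (-1 : ℝ) else 1)

/-- With `t`, `s` the weights of the two classes, testing `dg • Ω - W ⪰ 0` against the vector equal
to `1 ± (s - t) / 2` on them gives `-dg (s - t)² / 2 ≥ 0`. -/
lemma weight_eq_half (h : AdvDualFeasible inp g Ω W) (hsub : (dg • Ω - W).PosSemidef)
    (hsum : ∑ x, ∑ y, W x y = dg) (hdg : 0 < dg) :
    ∑ x ∈ univ.filter (fun x => g x = true), Ω x x = 1 / 2 ∧
      ∑ x ∈ univ.filter (fun x => g x = false), Ω x x = 1 / 2 := by
  obtain ⟨hdiag, -, htr, -, hbip, -⟩ := h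
  set t := ∑ x ∈ univ.filter (fun x => g x = true), Ω x x
  set s := ∑ x ∈ univ.filter (fun x => g x = false), Ω x x
  have hts : t + s = 1 := by
    have hsplit := sum_mul_comp_bool g (fun x => Ω x x) 1
    simp only [Pi.one_apply, mul_one] at hsplit
    rw [← hsplit, ← htr, trace]
    rfl
  set c : Bool → ℝ := fun b => if b then 1 + (s - t) / 2 else 1 - (s - t) / 2
  have hweights : ∑ x, Ω x x * (c ∘ g) x ^ 2 = t * c true ^ 2 + s * c false ^ 2 :=
    sum_mul_comp_bool g (fun x => Ω x x) fun b => c b ^ 2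
  have hq := hsub.dotProduct_mulVec_nonneg (c ∘ g)
  rw [star_trivial, sub_mulVec, smul_mulVec, dotProduct_sub, dotProduct_smul, smul_eq_mul,
    hdiag.dotProduct_mulVec_self, dotProduct_mulVec_comp_of_bipartite hbip, hsum,
    hweights] at hq
  simp only [c, if_true, Bool.false_eq_true, if_false] at hq
  have hexpand : dg * (t * (1 + (s - t) / 2) ^ 2 + s * (1 - (s - t) / 2) ^ 2) -
      (1 + (s - t) / 2) * (1 - (s - t) / 2) * dg = -(dg * (s - t) ^ 2) / 2 := by
    rw [show s = 1 - t by linarith]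
    ring
  have hst : (s - t) ^ 2 = 0 :=
    le_antisymm (nonpos_of_mul_nonpos_right (by linarith) hdg) (sq_nonneg _)
  have hs_eq_t := pow_eq_zero_iff two_ne_zero |>.1 hst
  constructor <;> linarith

end AdvDualFeasible

lemma exists_balanced_diagonal {X : Type*} [Fintype X] [DecidableEq X] {g : X → Bool}
    (hg : Function.Surjective g) :
    ∃ Ω : Matrix X X ℝ, Ω.IsDiag ∧ Ω.PosSemidef ∧ Ω.trace = 1 ∧
      ∑ x ∈ univ.filter (fun x => g x = true), Ω x x = 1 / 2 ∧
      ∑ x ∈ univ.filter (fun x => g x = false), Ω x x = 1 / 2 := by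
  obtain ⟨a, ha⟩ := hg true
  obtain ⟨b, hb⟩ := hg false
  have hw : ∀ c, ∑ x ∈ univ.filter (fun x => g x = c),
      (Pi.single a (1 / 2) + Pi.single b (1 / 2) : X → ℝ) x = 1 / 2 := by
    rintro (_ | _) <;> simp [sum_add_distrib, sum_pi_single', ha, hb]
  refine ⟨diagonal (Pi.single a (1 / 2) + Pi.single b (1 / 2)), isDiag_diagonal _,
    posSemidef_diagonal_iff.2 ?_, ?_, by simpa using hw true, by simpa using hw false⟩
  · intro x
    simp only [Pi.add_apply, Pi.single_apply]
    split_ifs <;> norm_num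
  · norm_num [trace_diagonal, sum_add_distrib, sum_pi_single']

theorem stmt18_general {X ι C : Type*} [Fintype X] [DecidableEq X] [DecidableEq C]
    (inp : X → ι → C) (g : X → Bool) (hsurj : Function.Surjective g)
    (dg : ℝ)
    (hopt : ∃ Ω W, AdvDualFeasible inp g Ω W ∧ ∑ x, ∑ y, W x y = dg)
    (hbound : ∀ Ω W, AdvDualFeasible inp g Ω W → ∑ x, ∑ y, W x y ≤ dg) :
    ∃ Ω W, AdvDualFeasible inp g Ω W ∧ ∑ x, ∑ y, W x y = dg ∧
      (dg • Ω + W).PosSemidef ∧ (dg • Ω - W).PosSemidef ∧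
      ∑ x ∈ Finset.univ.filter (fun x => g x = true), Ω x x = 1 / 2 ∧
      ∑ x ∈ Finset.univ.filter (fun x => g x = false), Ω x x = 1 / 2 := by
  obtain ⟨Ω, W, hfeas, hsum⟩ := hopt
  have hdg : 0 ≤ dg := by
    simpa using hbound Ω 0 (.of_zero hfeas.1 hfeas.2.1 hfeas.2.2.1)
  rcases hdg.eq_or_lt with rfl | hpos
  · obtain ⟨Ω₀, hdiag, hpsd, htr, hweights⟩ := exists_balanced_diagonal hsurj
    exact ⟨Ω₀, 0, .of_zero hdiag hpsd htr, by simp, by simpa using .zero, by simpa using .zero,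
      hweights⟩
  · have hsub := hfeas.posSemidef_smul_sub hbound
    exact ⟨Ω, W, hfeas, hsum, hfeas.posSemidef_smul_add hsub, hsub,
      hfeas.weight_eq_half hsub hsum hpos⟩

theorem stmt18 {X ι C : Type*} [Fintype X] [DecidableEq X] [Fintype ι] [DecidableEq C]
    (inp : X → ι → C) (g : X → Bool) (hsurj : Function.Surjective g)
    (dg : ℝ)
    (hopt : ∃ Ω W, AdvDualFeasible inp g Ω W ∧ ∑ x, ∑ y, W x y = dg)
    (hbound : ∀ Ω W, AdvDualFeasible inp g Ω W → ∑ x, ∑ y, W x y ≤ dg) :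
    ∃ Ω W, AdvDualFeasible inp g Ω W ∧ ∑ x, ∑ y, W x y = dg ∧
      (dg • Ω + W).PosSemidef ∧ (dg • Ω - W).PosSemidef ∧
      ∑ x ∈ Finset.univ.filter (fun x => g x = true), Ω x x = 1 / 2 ∧
      ∑ x ∈ Finset.univ.filter (fun x => g x = false), Ω x x = 1 / 2 :=
  stmt18_general inp g hsurj dg hopt hbound
end
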